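/- Let Z be a standard Borel space, κ a Markov kernel from Z to Z, η a κ-invariant probability measure, Q the induced Markov operator on L¹(Z,η), and ℙ the stationary two-sided trajectory measure on Z^ℤ. Assume: (i) for every n ≥ 1, every ψ ∈ L²(Z,η) with Q^n ψ = ψ is a.e. constant; and (ii) the tail σ-algebra F_tail contains only finitely many sets up to ℙ-null sets (i.e. every infinite family of sets in F_tail contains two sets differing by a ℙ-null set). Then F_tail is trivial: every set in F_tail has ℙ-measure 0 or 1. -/

import Mathlib

/-!
Shifts of a tail set `A` are tail sets, so by finiteness two of them agree up to a null set, and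
by shift invariance of `P` the set `A` agrees a.e. with its preimage under the shift by some
`k ≥ 1`. Let `hₙ(z) = P(A | ω n = z)`. Since `A` only depends on the future, the Markov property
(obtained by a Dynkin argument from cylinder sets) gives `hₙ = R hₙ₊₁` with `R = lintegralOp κ`,
while periodicity gives `hₙ₊ₖ = hₙ`. Thus `hₙ` is a bounded fixed point of `Rᵏ = Qᵏ`,
hence the constant `P A` by (i). Feeding this back into the Markov property shows that `A` is
independent of every cylinder set, hence of itself, so `P A ∈ {0, 1}`.
-/

open MeasureTheory Filter ENNReal Topology ProbabilityTheory

noncomputable section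

/-- `chainProb κ [A₁,…,Aₙ] z = ∫_{A₁} κ(z,dz₁) ∫_{A₂} κ(z₁,dz₂) ⋯ κ(z_{n−1}, Aₙ)`. -/
def chainProb {Z : Type*} [MeasurableSpace Z] (κ : Kernel Z Z) :
    List (Set Z) → Z → ℝ≥0∞
  | [], _ => 1
  | A :: rest, z => ∫⁻ y in A, chainProb κ rest y ∂(κ z)

/-- `P` is the stationary two-sided trajectory measure on `Z^ℤ` of the Markov kernel `κ` with
invariant initial distribution `η`: its finite-dimensional distributions are
`ℙ(z_m ∈ A_m, …, z_n ∈ A_n) = ∫_{A_m} η(dz_m) ∫_{A_{m+1}} κ(z_m,dz_{m+1}) ⋯ ∫_{A_n} κ(z_{n−1},dz_n)`. -/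
def IsTrajMeasure {Z : Type*} [MeasurableSpace Z] (η : Measure Z) (κ : Kernel Z Z)
    (P : Measure (ℤ → Z)) : Prop :=
  ∀ (m : ℤ) (A₀ : Set Z) (L : List (Set Z)), MeasurableSet A₀ →
    (∀ A ∈ L, MeasurableSet A) →
    P {ω | ω m ∈ A₀ ∧ ∀ i : Fin L.length, ω (m + 1 + ((i : ℕ) : ℤ)) ∈ L.get i} =
      ∫⁻ z in A₀, chainProb κ L z ∂η

/-- The σ-algebra `σ(z_m : m ≥ n)` on `Z^ℤ` generated by the coordinates with index `≥ n`. -/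
def coordFromSA (Z : Type*) [MeasurableSpace Z] (n : ℤ) : MeasurableSpace (ℤ → Z) :=
  ⨆ m : ℤ, ⨆ _ : n ≤ m, MeasurableSpace.comap (fun ω : ℤ → Z => ω m) inferInstance

/-- The tail σ-algebra `F_tail = ⋂_{n ≥ 0} σ(z_m : m ≥ n)` on `Z^ℤ`. -/
def tailSA (Z : Type*) [MeasurableSpace Z] : MeasurableSpace (ℤ → Z) :=
  ⨅ n : ℕ, coordFromSA Z (n : ℤ)

/-- The constant function `1` as an element of `L¹(Z,η)`. -/
def oneL1 {Z : Type*} [MeasurableSpace Z] (η : Measure Z) [IsFiniteMeasure η] : Lp ℝ 1 η :=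
  MemLp.toLp (fun _ => (1 : ℝ)) (memLp_const 1)

/-- A measure-preserving Markov operator on `L¹(Z,η)`. -/
def IsMarkovOp {Z : Type*} [MeasurableSpace Z] (η : Measure Z) [IsFiniteMeasure η]
    (Q : Lp ℝ 1 η →ₗ[ℝ] Lp ℝ 1 η) : Prop :=
  (∀ φ : Lp ℝ 1 η, 0 ≤ φ → 0 ≤ Q φ) ∧
  Q (oneL1 η) = oneL1 η ∧
  ∀ φ : Lp ℝ 1 η, ∫ z, (Q φ : Z → ℝ) z ∂η = ∫ z, (φ : Z → ℝ) z ∂η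

/-- `Qs` agrees on `L²(Z,η)` with the adjoint of the restriction of `Q` to `L²`. -/
def MarkovAdjoint {Z : Type*} [MeasurableSpace Z] (η : Measure Z) [IsFiniteMeasure η]
    (Q Qs : Lp ℝ 1 η →ₗ[ℝ] Lp ℝ 1 η) : Prop :=
  ∀ φ ψ : Lp ℝ 1 η, MemLp (φ : Z → ℝ) 2 η → MemLp (ψ : Z → ℝ) 2 η →
    ∫ z, (Q φ : Z → ℝ) z * (ψ : Z → ℝ) z ∂η
      = ∫ z, (φ : Z → ℝ) z * (Qs ψ : Z → ℝ) z ∂η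

namespace MarkovChain

variable {Z : Type*}

def cyl (m : ℤ) : List (Set Z) → Set (ℤ → Z)
  | [] => Set.univ
  | A :: L => {ω | ω m ∈ A} ∩ cyl (m + 1) L

def shift (k : ℤ) (ω : ℤ → Z) : ℤ → Z := fun n => ω (n + k)

theorem cyl_singleton (m : ℤ) (A : Set Z) : cyl m [A] = {ω | ω m ∈ A} :=
  Set.inter_univ _

theorem cyl_append (m : ℤ) (L L' : List (Set Z)) :
    cyl m (L ++ L') = cyl m L ∩ cyl (m + L.length) L' := by
  induction L generalizing m with
  | nil => simp [cyl]
  | cons A L ih =>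
    rw [List.cons_append, cyl, cyl, ih, Set.inter_assoc, List.length_cons, Nat.cast_succ,
      add_right_comm m 1, ← add_assoc]

theorem cyl_replicate_univ (m : ℤ) (k : ℕ) :
    cyl m (List.replicate k (Set.univ : Set Z)) = Set.univ := by
  induction k generalizing m with
  | zero => rfl
  | succ k ih => simp [List.replicate_succ, cyl, ih]

theorem cyl_add (m : ℤ) (k : ℕ) (L : List (Set Z)) :
    cyl (m + k) L = cyl m (List.replicate k Set.univ ++ L) := by
  rw [cyl_append, cyl_replicate_univ, List.length_replicate, Set.univ_inter]

theorem mem_cyl {m : ℤ} {L : List (Set Z)} {ω : ℤ → Z} :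
    ω ∈ cyl m L ↔ ∀ i : Fin L.length, ω (m + i) ∈ L.get i := by
  induction L generalizing m with
  | nil => simp [cyl]
  | cons A L ih =>
    simp only [cyl, Set.mem_inter_iff, ih, List.length_cons,
      Fin.forall_fin_succ, Fin.val_zero, Fin.val_succ, List.get_cons_zero]
    simp [add_assoc, add_comm (1 : ℤ)]

theorem shift_preimage_cyl (k m : ℤ) (L : List (Set Z)) :
    shift k ⁻¹' cyl m L = cyl (m + k) L := by
  induction L generalizing m with
  | nil => rfl
  | cons A L ih =>
    rw [cyl, cyl, Set.preimage_inter, ih, add_right_comm]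
    rfl

theorem shift_comp_shift (j k : ℤ) : shift (Z := Z) k ∘ shift j = shift (k + j) := by
  funext ω n
  show ω (n + k + j) = ω (n + (k + j))
  rw [add_assoc]

variable [MeasurableSpace Z] {κ : Kernel Z Z} {η : Measure Z} {P : Measure (ℤ → Z)}

def lintegralOp (κ : Kernel Z Z) (g : Z → ℝ≥0∞) (z : Z) : ℝ≥0∞ := ∫⁻ y, g y ∂κ z

def chainLIntegral (κ : Kernel Z Z) : List (Set Z) → (Z → ℝ≥0∞) → Z → ℝ≥0∞
  | [], g => g
  | A :: L, g => fun z => ∫⁻ y in A, chainLIntegral κ L g y ∂κ z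

theorem chainProb_eq_chainLIntegral : ∀ L : List (Set Z), chainProb κ L = chainLIntegral κ L 1
  | [] => rfl
  | A :: L => by
    funext z
    simp only [chainProb, chainLIntegral, chainProb_eq_chainLIntegral L]

theorem chainLIntegral_append (L L' : List (Set Z)) (g : Z → ℝ≥0∞) :
    chainLIntegral κ (L ++ L') g = chainLIntegral κ L (chainLIntegral κ L' g) := by
  induction L with
  | nil => rfl
  | cons A L ih => simp only [List.cons_append, chainLIntegral, ih]

theorem measurable_lintegralOp {g : Z → ℝ≥0∞} (hg : Measurable g) :
    Measurable (lintegralOp κ g) :=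
  hg.lintegral_kernel

theorem measurable_chainLIntegral [IsSFiniteKernel κ] {L : List (Set Z)}
    (hL : ∀ A ∈ L, MeasurableSet A) {g : Z → ℝ≥0∞} (hg : Measurable g) :
    Measurable (chainLIntegral κ L g) := by
  induction L with
  | nil => exact hg
  | cons A L ih =>
    obtain ⟨hA, hL⟩ := List.forall_mem_cons.1 hL
    exact (ih hL).setLIntegral_kernel hA

theorem lintegralOp_const [IsMarkovKernel κ] (c : ℝ≥0∞) :
    lintegralOp κ (fun _ => c) = fun _ => c := by
  funext z
  simp [lintegralOp]

theorem lintegralOp_add {g : Z → ℝ≥0∞} (hg : Measurable g) (g' : Z → ℝ≥0∞) :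
    lintegralOp κ (g + g') = lintegralOp κ g + lintegralOp κ g' := by
  funext z
  exact lintegral_add_left hg g'

theorem lintegralOp_tsum {g : ℕ → Z → ℝ≥0∞} (hg : ∀ i, Measurable (g i)) :
    lintegralOp κ (fun z => ∑' i, g i z) = fun z => ∑' i, lintegralOp κ (g i) z := by
  funext z
  exact lintegral_tsum fun i => (hg i).aemeasurable

theorem chainLIntegral_add [IsSFiniteKernel κ] {L : List (Set Z)} (hL : ∀ A ∈ L, MeasurableSet A)
    {g : Z → ℝ≥0∞} (hg : Measurable g) (g' : Z → ℝ≥0∞) :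
    chainLIntegral κ L (g + g') = chainLIntegral κ L g + chainLIntegral κ L g' := by
  induction L with
  | nil => rfl
  | cons A L ih =>
    obtain ⟨-, hL⟩ := List.forall_mem_cons.1 hL
    funext z
    simp only [chainLIntegral, ih hL, Pi.add_apply]
    exact lintegral_add_left (measurable_chainLIntegral hL hg) _

theorem chainLIntegral_tsum [IsSFiniteKernel κ] {L : List (Set Z)}
    (hL : ∀ A ∈ L, MeasurableSet A) {g : ℕ → Z → ℝ≥0∞} (hg : ∀ i, Measurable (g i)) :
    chainLIntegral κ L (fun z => ∑' i, g i z) = fun z => ∑' i, chainLIntegral κ L (g i) z := by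
  induction L with
  | nil => rfl
  | cons A L ih =>
    obtain ⟨-, hL⟩ := List.forall_mem_cons.1 hL
    funext z
    simp only [chainLIntegral, ih hL]
    exact lintegral_tsum fun i => (measurable_chainLIntegral hL (hg i)).aemeasurable

theorem chainLIntegral_const [IsSFiniteKernel κ] {L : List (Set Z)}
    (hL : ∀ A ∈ L, MeasurableSet A) (c : ℝ≥0∞) :
    chainLIntegral κ L (fun _ => c) = fun z => c * chainLIntegral κ L 1 z := by
  induction L with
  | nil => funext z; simp [chainLIntegral]
  | cons A L ih =>
    obtain ⟨-, hL⟩ := List.forall_mem_cons.1 hL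
    funext z
    simp only [chainLIntegral, ih hL]
    exact lintegral_const_mul c (measurable_chainLIntegral hL measurable_const)

theorem _root_.ProbabilityTheory.Kernel.Invariant.ae_ae_of_ae (hinv : κ.Invariant η)
    {p : Z → Prop} (h : ∀ᵐ y ∂η, p y) : ∀ᵐ z ∂η, ∀ᵐ y ∂κ z, p y :=
  Measure.ae_ae_of_ae_comp (by rwa [show κ ∘ₘ η = η from hinv])

theorem lintegralOp_congr_ae (hinv : κ.Invariant η) {g g' : Z → ℝ≥0∞} (h : g =ᵐ[η] g') :
    lintegralOp κ g =ᵐ[η] lintegralOp κ g' :=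
  (hinv.ae_ae_of_ae h).mono fun _ hz => lintegral_congr_ae hz

theorem iterate_lintegralOp_congr_ae (hinv : κ.Invariant η) {g g' : Z → ℝ≥0∞}
    (h : g =ᵐ[η] g') (n : ℕ) : (lintegralOp κ)^[n] g =ᵐ[η] (lintegralOp κ)^[n] g' := by
  induction n with
  | zero => exact h
  | succ n ih =>
    simpa only [Function.iterate_succ_apply'] using lintegralOp_congr_ae hinv ih

theorem measurable_iterate_lintegralOp {g : Z → ℝ≥0∞} (hg : Measurable g) (j : ℕ) :
    Measurable ((lintegralOp κ)^[j] g) := by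
  induction j with
  | zero => exact hg
  | succ j ih => simpa only [Function.iterate_succ_apply'] using measurable_lintegralOp ih

theorem iterate_lintegralOp_le_one [IsMarkovKernel κ] {g : Z → ℝ≥0∞} (hg1 : ∀ z, g z ≤ 1)
    (j : ℕ) (z : Z) :
    (lintegralOp κ)^[j] g z ≤ 1 := by
  induction j generalizing z with
  | zero => exact hg1 z
  | succ j ih =>
    rw [Function.iterate_succ_apply']
    calc lintegralOp κ ((lintegralOp κ)^[j] g) z ≤ lintegralOp κ (fun _ => 1) z := lintegral_mono ih
      _ = 1 := by rw [lintegralOp_const]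

theorem chainLIntegral_congr_ae (hinv : κ.Invariant η) (L : List (Set Z)) {g g' : Z → ℝ≥0∞}
    (h : g =ᵐ[η] g') : chainLIntegral κ L g =ᵐ[η] chainLIntegral κ L g' := by
  induction L with
  | nil => exact h
  | cons A L ih =>
    exact (hinv.ae_ae_of_ae ih).mono fun _ hz => lintegral_congr_ae (ae_restrict_of_ae hz)

theorem exists_cyl_eq_inter (m : ℤ) {L L' : List (Set Z)} (hL : ∀ A ∈ L, MeasurableSet A)
    (hL' : ∀ A ∈ L', MeasurableSet A) :
    ∃ L'' : List (Set Z), (∀ A ∈ L'', MeasurableSet A) ∧ cyl m L'' = cyl m L ∩ cyl m L' := by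
  induction L generalizing m L' with
  | nil => exact ⟨L', hL', (Set.univ_inter _).symm⟩
  | cons A L ih =>
    cases L' with
    | nil => exact ⟨A :: L, hL, (Set.inter_univ _).symm⟩
    | cons A' L' =>
      obtain ⟨hA, hL⟩ := List.forall_mem_cons.1 hL
      obtain ⟨hA', hL'⟩ := List.forall_mem_cons.1 hL'
      obtain ⟨L'', hL'', h⟩ := ih (m + 1) hL hL'
      refine ⟨(A ∩ A') :: L'', List.forall_mem_cons.2 ⟨hA.inter hA', hL''⟩, ?_⟩
      rw [cyl, cyl, cyl, h, Set.inter_inter_inter_comm]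
      rfl

theorem measurable_shift (k : ℤ) : Measurable (shift (Z := Z) k) :=
  measurable_pi_lambda _ fun n => measurable_pi_apply (n + k)


theorem comap_eval_le_coordFromSA {n m : ℤ} (h : n ≤ m) :
    MeasurableSpace.comap (fun ω : ℤ → Z => ω m) inferInstance ≤ coordFromSA Z n :=
  le_iSup₂ (f := fun m (_ : n ≤ m) => MeasurableSpace.comap (fun ω : ℤ → Z => ω m) inferInstance)
    m h

theorem coordFromSA_anti : Antitone (coordFromSA Z) :=
  fun _ _ hab => iSup₂_le fun _ hm => comap_eval_le_coordFromSA (hab.trans hm)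

theorem coordFromSA_le_pi (n : ℤ) : coordFromSA Z n ≤ MeasurableSpace.pi :=
  iSup₂_le fun m _ => (measurable_pi_apply m).comap_le

theorem tailSA_le_coordFromSA (n : ℤ) : tailSA Z ≤ coordFromSA Z n :=
  (iInf_le _ n.toNat).trans (coordFromSA_anti (Int.self_le_toNat n))

theorem tailSA_le_pi : tailSA Z ≤ MeasurableSpace.pi :=
  (tailSA_le_coordFromSA 0).trans (coordFromSA_le_pi 0)

theorem measurableSet_coordFromSA_cyl {m : ℤ} {L : List (Set Z)}
    (hL : ∀ A ∈ L, MeasurableSet A) : MeasurableSet[coordFromSA Z m] (cyl m L) := by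
  induction L generalizing m with
  | nil => exact MeasurableSet.univ
  | cons A L ih =>
    obtain ⟨hA, hL⟩ := List.forall_mem_cons.1 hL
    exact (comap_eval_le_coordFromSA le_rfl _ ⟨A, hA, rfl⟩).inter
      (coordFromSA_anti (by omega) _ (ih hL))

theorem measurableSet_cyl {m : ℤ} {L : List (Set Z)} (hL : ∀ A ∈ L, MeasurableSet A) :
    MeasurableSet (cyl m L) :=
  coordFromSA_le_pi m _ (measurableSet_coordFromSA_cyl hL)

def cylindersFrom (Z : Type*) [MeasurableSpace Z] (n : ℤ) : Set (Set (ℤ → Z)) :=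
  {s | ∃ L : List (Set Z), (∀ A ∈ L, MeasurableSet A) ∧ cyl n L = s}

theorem cylindersFrom_anti : Antitone (cylindersFrom Z) := by
  rintro n m hnm _ ⟨L, hL, rfl⟩
  refine ⟨List.replicate (m - n).toNat Set.univ ++ L, ?_, ?_⟩
  · simp only [List.mem_append, List.mem_replicate]
    rintro A (⟨-, rfl⟩ | hA)
    exacts [MeasurableSet.univ, hL A hA]
  · rw [← cyl_add, Int.toNat_of_nonneg (by omega), add_sub_cancel]

theorem isPiSystem_cylindersFrom (n : ℤ) : IsPiSystem (cylindersFrom Z n) := by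
  rintro _ ⟨L, hL, rfl⟩ _ ⟨L', hL', rfl⟩ -
  exact exists_cyl_eq_inter n hL hL'

theorem isPiSystem_cylinders : IsPiSystem (⋃ n, cylindersFrom Z n) :=
  isPiSystem_iUnion_of_directed_le _ isPiSystem_cylindersFrom cylindersFrom_anti.directed_le

theorem coordFromSA_eq_generateFrom (n : ℤ) :
    coordFromSA Z n = MeasurableSpace.generateFrom (cylindersFrom Z n) := by
  refine le_antisymm (iSup₂_le fun m hm => ?_) (MeasurableSpace.generateFrom_le ?_)
  · rw [MeasurableSpace.comap_le_iff_le_map]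
    intro B hB
    obtain ⟨k, rfl⟩ : ∃ k : ℕ, m = n + k := ⟨(m - n).toNat, by omega⟩
    refine MeasurableSpace.measurableSet_generateFrom ⟨List.replicate k Set.univ ++ [B], ?_, ?_⟩
    · simp only [List.mem_append, List.mem_replicate, List.mem_singleton]
      rintro A (⟨-, rfl⟩ | rfl)
      exacts [MeasurableSet.univ, hB]
    · rw [← cyl_add, cyl_singleton]
      rfl
  · rintro _ ⟨L, hL, rfl⟩
    exact measurableSet_coordFromSA_cyl hL

theorem pi_eq_generateFrom_cylinders :
    (MeasurableSpace.pi : MeasurableSpace (ℤ → Z)) =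
      MeasurableSpace.generateFrom (⋃ n, cylindersFrom Z n) := by
  have hpi : (MeasurableSpace.pi : MeasurableSpace (ℤ → Z)) = ⨆ n, coordFromSA Z n :=
    le_antisymm (iSup_le fun m => (comap_eval_le_coordFromSA le_rfl).trans (le_iSup _ m))
      (iSup_le coordFromSA_le_pi)
  simp_rw [hpi, coordFromSA_eq_generateFrom, MeasurableSpace.iSup_generateFrom]

theorem comap_shift_coordFromSA_le (k m : ℤ) :
    (coordFromSA Z m).comap (shift k) ≤ coordFromSA Z (m + k) := by
  rw [coordFromSA_eq_generateFrom m, MeasurableSpace.comap_generateFrom]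
  refine MeasurableSpace.generateFrom_le ?_
  rintro _ ⟨_, ⟨L, hL, rfl⟩, rfl⟩
  rw [shift_preimage_cyl]
  exact measurableSet_coordFromSA_cyl hL

theorem measurableSet_tailSA_shift_preimage {A : Set (ℤ → Z)} (hA : MeasurableSet[tailSA Z] A)
    (k : ℤ) : MeasurableSet[tailSA Z] (shift k ⁻¹' A) := by
  refine MeasurableSpace.measurableSet_iInf.2 fun n => ?_
  have := comap_shift_coordFromSA_le k (n - k) _ ⟨A, tailSA_le_coordFromSA _ _ hA, rfl⟩
  rwa [sub_add_cancel] at this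

theorem measure_ext_of_cyl {μ ν : Measure (ℤ → Z)} [IsFiniteMeasure μ]
    (huniv : μ Set.univ = ν Set.univ)
    (h : ∀ (m : ℤ) (A₀ : Set Z) (L : List (Set Z)), MeasurableSet A₀ →
      (∀ A ∈ L, MeasurableSet A) → μ (cyl m (A₀ :: L)) = ν (cyl m (A₀ :: L))) : μ = ν := by
  refine ext_of_generate_finite _ pi_eq_generateFrom_cylinders isPiSystem_cylinders ?_ huniv
  rintro _ ⟨_, ⟨m, rfl⟩, L, hL, rfl⟩
  cases L with
  | nil => exact huniv
  | cons A₀ L =>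
    obtain ⟨hA₀, hL⟩ := List.forall_mem_cons.1 hL
    exact h m A₀ L hA₀ hL

theorem _root_.IsTrajMeasure.measure_cyl (hP : IsTrajMeasure η κ P) (m : ℤ) {A₀ : Set Z}
    (hA₀ : MeasurableSet A₀) {L : List (Set Z)} (hL : ∀ A ∈ L, MeasurableSet A) :
    P (cyl m (A₀ :: L)) = ∫⁻ z in A₀, chainLIntegral κ L 1 z ∂η := by
  rw [← chainProb_eq_chainLIntegral, ← hP m A₀ L hA₀ hL]
  congr 1
  ext ω
  exact and_congr_right' mem_cyl

theorem _root_.IsTrajMeasure.measure_eval (hP : IsTrajMeasure η κ P) (n : ℤ) {B : Set Z}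
    (hB : MeasurableSet B) : P {ω | ω n ∈ B} = η B := by
  rw [← cyl_singleton, hP.measure_cyl n hB (L := []) (by simp)]
  exact setLIntegral_one B

theorem _root_.IsTrajMeasure.measurePreserving_shift [IsProbabilityMeasure P]
    (hP : IsTrajMeasure η κ P) (k : ℤ) : MeasurePreserving (shift k) P P := by
  refine ⟨measurable_shift k, (measure_ext_of_cyl ?_ fun m A₀ L hA₀ hL => ?_).symm⟩
  · rw [Measure.map_apply (measurable_shift k) MeasurableSet.univ, Set.preimage_univ]
  · rw [Measure.map_apply (measurable_shift k)
      (measurableSet_cyl (List.forall_mem_cons.2 ⟨hA₀, hL⟩)), shift_preimage_cyl,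
      hP.measure_cyl _ hA₀ hL, hP.measure_cyl _ hA₀ hL]

section MarkovDensity

variable {n : ℤ} {A : Set (ℤ → Z)} {h : Z → ℝ≥0∞}

/-- `h z` plays the role of `P(A | ω n = z)`, and the last field is the Markov property
`P(A | ω m, …, ω (n - 1)) = lintegralOp κ h (ω (n - 1))`. -/
structure IsMarkovDensity (η : Measure Z) (κ : Kernel Z Z) (P : Measure (ℤ → Z)) (n : ℤ)
    (A : Set (ℤ → Z)) (h : Z → ℝ≥0∞) : Prop where
  measurable : Measurable h
  measure_inter_eval : ∀ B, MeasurableSet B → P (A ∩ {ω | ω n ∈ B}) = ∫⁻ z in B, h z ∂η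
  measure_inter_cyl : ∀ (m : ℤ) (A₀ : Set Z) (L : List (Set Z)), MeasurableSet A₀ →
    (∀ B ∈ L, MeasurableSet B) → m + L.length + 1 = n →
    P (A ∩ cyl m (A₀ :: L)) = ∫⁻ z in A₀, chainLIntegral κ L (lintegralOp κ h) z ∂η

theorem IsMarkovDensity.congr_ae (hinv : κ.Invariant η) (hd : IsMarkovDensity η κ P n A h)
    {h' : Z → ℝ≥0∞} (hh' : Measurable h') (heq : h =ᵐ[η] h') : IsMarkovDensity η κ P n A h' where
  measurable := hh'
  measure_inter_eval B hB := by
    rw [hd.measure_inter_eval B hB]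
    exact lintegral_congr_ae (ae_restrict_of_ae heq)
  measure_inter_cyl m A₀ L hA₀ hL hm := by
    rw [hd.measure_inter_cyl m A₀ L hA₀ hL hm]
    exact lintegral_congr_ae (ae_restrict_of_ae
      (chainLIntegral_congr_ae hinv L (lintegralOp_congr_ae hinv heq)))

theorem IsMarkovDensity.ae_le_one [IsFiniteMeasure η] (hP : IsTrajMeasure η κ P)
    (hd : IsMarkovDensity η κ P n A h) : h ≤ᵐ[η] 1 :=
  ae_le_of_forall_setLIntegral_le_of_sigmaFinite hd.measurable fun B hB _ => by
    rw [← hd.measure_inter_eval B hB, Pi.one_def, setLIntegral_one, ← hP.measure_eval n hB]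
    exact measure_mono Set.inter_subset_right

theorem IsMarkovDensity.ae_eq_lintegralOp [SigmaFinite η] {h' : Z → ℝ≥0∞}
    (hd : IsMarkovDensity η κ P n A h) (hd' : IsMarkovDensity η κ P (n + 1) A h') :
    h =ᵐ[η] lintegralOp κ h' :=
  ae_eq_of_forall_setLIntegral_eq_of_sigmaFinite hd.measurable
    (measurable_lintegralOp hd'.measurable)
    fun B hB _ => by
      rw [← hd.measure_inter_eval B hB, ← cyl_singleton,
        hd'.measure_inter_cyl n B [] hB (by simp) (by simp)]
      rfl

theorem IsMarkovDensity.ae_eq [SigmaFinite η] {n' : ℤ} {A' : Set (ℤ → Z)} {h' : Z → ℝ≥0∞}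
    (hd : IsMarkovDensity η κ P n A h) (hd' : IsMarkovDensity η κ P n' A' h')
    (heq : ∀ B, MeasurableSet B → P (A ∩ {ω | ω n ∈ B}) = P (A' ∩ {ω | ω n' ∈ B})) :
    h =ᵐ[η] h' :=
  ae_eq_of_forall_setLIntegral_eq_of_sigmaFinite hd.measurable hd'.measurable fun B hB _ => by
    rw [← hd.measure_inter_eval B hB, ← hd'.measure_inter_eval B hB, heq B hB]

theorem IsMarkovDensity.compl [IsFiniteMeasure P] [IsMarkovKernel κ] [IsFiniteMeasure η]
    (hP : IsTrajMeasure η κ P) (hinv : κ.Invariant η) (hA : MeasurableSet A)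
    (hd : IsMarkovDensity η κ P n A h) : IsMarkovDensity η κ P n Aᶜ (fun z => 1 - h z) := by
  have hsplit : ∀ S, P (A ∩ S) + P (Aᶜ ∩ S) = P S := fun S => by
    rw [Set.inter_comm A, Set.inter_comm Aᶜ, ← Set.sdiff_eq, measure_inter_add_sdiff S hA]
  have hsum : (fun z => h z + (1 - h z)) =ᵐ[η] 1 :=
    (hd.ae_le_one hP).mono fun z hz => add_tsub_cancel_of_le hz
  refine ⟨measurable_const.sub hd.measurable, fun B hB => ?_, fun m A₀ L hA₀ hL hm => ?_⟩
  · refine (ENNReal.add_right_inj (measure_ne_top P (A ∩ {ω | ω n ∈ B}))).1 ?_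
    rw [hsplit, hP.measure_eval n hB, hd.measure_inter_eval B hB,
      ← lintegral_add_left hd.measurable, lintegral_congr_ae (ae_restrict_of_ae hsum), Pi.one_def,
      setLIntegral_one]
  · refine (ENNReal.add_right_inj (measure_ne_top P (A ∩ cyl m (A₀ :: L)))).1 ?_
    have hR : lintegralOp κ h + lintegralOp κ (fun z => 1 - h z) =ᵐ[η] 1 := by
      rw [← lintegralOp_add hd.measurable]
      exact (lintegralOp_congr_ae hinv hsum).trans (EventuallyEq.of_eq (lintegralOp_const 1))
    have hchain := chainLIntegral_congr_ae hinv L hR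
    rw [chainLIntegral_add hL (measurable_lintegralOp hd.measurable)] at hchain
    rw [hsplit, hP.measure_cyl m hA₀ hL, hd.measure_inter_cyl m A₀ L hA₀ hL hm,
      ← lintegral_add_left (measurable_chainLIntegral hL (measurable_lintegralOp hd.measurable))]
    exact lintegral_congr_ae (ae_restrict_of_ae hchain.symm)

theorem IsMarkovDensity.iUnion [IsSFiniteKernel κ] {A : ℕ → Set (ℤ → Z)} {h : ℕ → Z → ℝ≥0∞}
    (hdisj : Pairwise (Function.onFun Disjoint A)) (hA : ∀ i, MeasurableSet (A i))
    (hd : ∀ i, IsMarkovDensity η κ P n (A i) (h i)) :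
    IsMarkovDensity η κ P n (⋃ i, A i) (fun z => ∑' i, h i z) := by
  have hsum : ∀ S, MeasurableSet S → P ((⋃ i, A i) ∩ S) = ∑' i, P (A i ∩ S) := fun S hS => by
    rw [Set.iUnion_inter]
    exact measure_iUnion (hdisj.mono fun i j hij => hij.mono Set.inter_subset_left
      Set.inter_subset_left) fun i => (hA i).inter hS
  have hh : ∀ i, Measurable (h i) := fun i => (hd i).measurable
  refine ⟨Measurable.tsum hh, fun B hB => ?_, fun m A₀ L hA₀ hL hm => ?_⟩
  · rw [hsum {ω | ω n ∈ B} (measurable_pi_apply n hB), lintegral_tsum fun i => (hh i).aemeasurable]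
    exact tsum_congr fun i => (hd i).measure_inter_eval B hB
  · rw [hsum _ (measurableSet_cyl (List.forall_mem_cons.2 ⟨hA₀, hL⟩)), lintegralOp_tsum hh,
      chainLIntegral_tsum hL fun i => measurable_lintegralOp (hh i),
      lintegral_tsum fun i =>
        (measurable_chainLIntegral hL (measurable_lintegralOp (hh i))).aemeasurable]
    exact tsum_congr fun i => (hd i).measure_inter_cyl m A₀ L hA₀ hL hm

theorem exists_isMarkovDensity_cyl [IsMarkovKernel κ] (hP : IsTrajMeasure η κ P) (n : ℤ)
    {L : List (Set Z)} (hL : ∀ A ∈ L, MeasurableSet A) :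
    ∃ h, IsMarkovDensity η κ P n (cyl n L) h := by
  cases L with
  | nil =>
    refine ⟨fun _ => 1, measurable_const, fun B hB => ?_, fun m A₀ L hA₀ hL _ => ?_⟩
    · rw [cyl, Set.univ_inter, hP.measure_eval n hB, setLIntegral_one]
    · rw [cyl, Set.univ_inter, hP.measure_cyl m hA₀ hL, lintegralOp_const]
      rfl
  | cons B₀ M =>
    obtain ⟨hB₀, hM⟩ := List.forall_mem_cons.1 hL
    refine ⟨B₀.indicator (chainLIntegral κ M 1),
      (measurable_chainLIntegral hM measurable_const).indicator hB₀, fun B hB => ?_,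
      fun m A₀ L' hA₀ hL' hm => ?_⟩
    · have hcyl : cyl n (B₀ :: M) ∩ {ω | ω n ∈ B} = cyl n ((B₀ ∩ B) :: M) := by
        rw [cyl, cyl, Set.inter_right_comm]
        rfl
      rw [hcyl, hP.measure_cyl n (hB₀.inter hB) hM, setLIntegral_indicator hB₀]
    · have hcyl : cyl n (B₀ :: M) ∩ cyl m (A₀ :: L') = cyl m (A₀ :: (L' ++ B₀ :: M)) := by
        rw [Set.inter_comm, ← List.cons_append, cyl_append, List.length_cons, Nat.cast_succ,
          ← add_assoc, hm]
      have hR : lintegralOp κ (B₀.indicator (chainLIntegral κ M 1)) =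
          chainLIntegral κ (B₀ :: M) 1 := by
        funext z
        exact lintegral_indicator hB₀ _
      rw [hcyl, hP.measure_cyl m hA₀ fun A hA => (List.mem_append.1 hA).elim (hL' A) (hL A),
        chainLIntegral_append, hR]

theorem exists_isMarkovDensity [IsFiniteMeasure P] [IsMarkovKernel κ] [IsFiniteMeasure η]
    (hP : IsTrajMeasure η κ P) (hinv : κ.Invariant η) (n : ℤ)
    (hA : MeasurableSet[coordFromSA Z n] A) : ∃ h, IsMarkovDensity η κ P n A h := by
  refine MeasurableSpace.induction_on_inter (C := fun A _ => ∃ h, IsMarkovDensity η κ P n A h)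
    (coordFromSA_eq_generateFrom n) (isPiSystem_cylindersFrom n) ?_ ?_ ?_ ?_ A hA
  · obtain ⟨h, hd⟩ := exists_isMarkovDensity_cyl hP n (L := []) (by simp)
    have := hd.compl hP hinv MeasurableSet.univ
    rw [Set.compl_univ] at this
    exact ⟨_, this⟩
  · rintro _ ⟨L, hL, rfl⟩
    exact exists_isMarkovDensity_cyl hP n hL
  · rintro t htm ⟨h, hd⟩
    exact ⟨_, hd.compl hP hinv (coordFromSA_le_pi n _ htm)⟩
  · intro f hdisj hfm hf
    choose h hd using hf
    exact ⟨_, IsMarkovDensity.iUnion hdisj (fun i => coordFromSA_le_pi n _ (hfm i)) hd⟩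

end MarkovDensity

section FixedPoints

variable [IsMarkovKernel κ] [IsFiniteMeasure η] {g : Z → ℝ≥0∞}

theorem memLp_toReal_of_le_one (hg : Measurable g) (hg1 : ∀ z, g z ≤ 1) (p : ℝ≥0∞) :
    MemLp (fun z => (g z).toReal) p η :=
  MemLp.of_bound hg.ennreal_toReal.aestronglyMeasurable 1 (ae_of_all _ fun z => by
    simpa using ENNReal.toReal_mono one_ne_top (hg1 z))

theorem coeFn_pow_toLp_ae_eq (Q : Lp ℝ 1 η →ₗ[ℝ] Lp ℝ 1 η)
    (hQrep : ∀ φ : Lp ℝ 1 η, (Q φ : Z → ℝ) =ᵐ[η] fun z => ∫ y, (φ : Z → ℝ) y ∂(κ z))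
    (hinv : κ.Invariant η) (hg : Measurable g) (hg1 : ∀ z, g z ≤ 1)
    (j : ℕ) : ((Q ^ j) (MemLp.toLp _ (memLp_toReal_of_le_one hg hg1 1)) : Z → ℝ) =ᵐ[η]
      fun z => ((lintegralOp κ)^[j] g z).toReal := by
  induction j with
  | zero => exact MemLp.coeFn_toLp (memLp_toReal_of_le_one hg hg1 1)
  | succ j ih =>
    rw [pow_succ', Module.End.mul_apply]
    refine (hQrep _).trans ((hinv.ae_ae_of_ae ih).mono fun z hz => ?_)
    dsimp only
    rw [integral_congr_ae hz, integral_toReal (measurable_iterate_lintegralOp hg j).aemeasurable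
      (ae_of_all _ fun y => (iterate_lintegralOp_le_one hg1 j y).trans_lt one_lt_top),
      Function.iterate_succ_apply']
    rfl

theorem ae_eq_const_of_ae_eq_iterate (Q : Lp ℝ 1 η →ₗ[ℝ] Lp ℝ 1 η)
    (hQrep : ∀ φ : Lp ℝ 1 η, (Q φ : Z → ℝ) =ᵐ[η] fun z => ∫ y, (φ : Z → ℝ) y ∂(κ z))
    (hinv : κ.Invariant η) {k : ℕ}
    (hfix : ∀ ψ : Lp ℝ 1 η, MemLp (ψ : Z → ℝ) 2 η → (Q ^ k) ψ = ψ → ∃ c : ℝ, ψ = c • oneL1 η)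
    (hg : Measurable g) (hg1 : ∀ z, g z ≤ 1) (hgk : g =ᵐ[η] (lintegralOp κ)^[k] g) :
    ∃ c : ℝ≥0∞, g =ᵐ[η] fun _ => c := by
  set φ := MemLp.toLp _ (memLp_toReal_of_le_one (η := η) hg hg1 1)
  have hφ : (φ : Z → ℝ) =ᵐ[η] fun z => (g z).toReal := MemLp.coeFn_toLp _
  have hgk' : (fun z => ((lintegralOp κ)^[k] g z).toReal) =ᵐ[η] fun z => (g z).toReal :=
    hgk.mono fun z hz => congrArg ENNReal.toReal hz.symm
  have hφk : (Q ^ k) φ = φ :=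
    Lp.ext ((coeFn_pow_toLp_ae_eq Q hQrep hinv hg hg1 k).trans (hgk'.trans hφ.symm))
  obtain ⟨c, hc⟩ := hfix φ ((memLp_congr_ae hφ).2 (memLp_toReal_of_le_one hg hg1 2)) hφk
  have hone : (oneL1 η : Z → ℝ) =ᵐ[η] fun _ => 1 := MemLp.coeFn_toLp _
  have hgc : (fun z => (g z).toReal) =ᵐ[η] fun _ => c := by
    refine hφ.symm.trans ?_
    rw [hc]
    exact (Lp.coeFn_smul c _).trans (hone.mono fun z hz => by simp [hz])
  refine ⟨ENNReal.ofReal c, hgc.mono fun z (hz : (g z).toReal = c) => ?_⟩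
  rw [← hz, ENNReal.ofReal_toReal ((hg1 z).trans_lt one_lt_top).ne]

end FixedPoints

section Tail

variable {A : Set (ℤ → Z)}

theorem exists_ae_eq_shift_preimage [IsProbabilityMeasure P] (hP : IsTrajMeasure η κ P)
    (hfin : ∀ f : ℕ → Set (ℤ → Z), (∀ i, MeasurableSet[tailSA Z] (f i)) →
      ∃ i j, i ≠ j ∧ P (symmDiff (f i) (f j)) = 0)
    (hA : MeasurableSet[tailSA Z] A) : ∃ k : ℕ, 0 < k ∧ A =ᵐ[P] shift k ⁻¹' A := by
  have hAm := tailSA_le_pi _ hA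
  obtain ⟨i, j, hij, hnull⟩ := hfin (fun i : ℕ => shift i ⁻¹' A)
    fun i => measurableSet_tailSA_shift_preimage hA i
  wlog hlt : i < j generalizing i j
  · exact this j i hij.symm (by rwa [symmDiff_comm]) (hij.lt_or_gt.resolve_left hlt)
  refine ⟨j - i, by omega, measure_symmDiff_eq_zero_iff.1 ?_⟩
  rw [← (hP.measurePreserving_shift i).measure_preimage
    (hAm.symmDiff (measurable_shift _ hAm)).nullMeasurableSet, Set.preimage_symmDiff,
    ← Set.preimage_comp, shift_comp_shift, show ((j - i : ℕ) : ℤ) + i = j by omega]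
  exact hnull

theorem measure_inter_eval_add_eq {k : ℤ} (hk : MeasurePreserving (shift k) P P)
    (hA : MeasurableSet A) (hper : A =ᵐ[P] shift k ⁻¹' A) (n : ℤ) {B : Set Z}
    (hB : MeasurableSet B) : P (A ∩ {ω | ω (n + k) ∈ B}) = P (A ∩ {ω | ω n ∈ B}) :=
  calc P (A ∩ {ω | ω (n + k) ∈ B}) = P (shift k ⁻¹' A ∩ shift k ⁻¹' {ω | ω n ∈ B}) :=
        measure_congr (ae_eq_set_inter hper (ae_eq_refl _))
    _ = P (A ∩ {ω | ω n ∈ B}) :=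
        hk.measure_preimage (hA.inter (measurable_pi_apply n hB)).nullMeasurableSet

theorem exists_isMarkovDensity_ae_eq_const [IsProbabilityMeasure P] [IsMarkovKernel κ]
    [IsProbabilityMeasure η] (hP : IsTrajMeasure η κ P) (hinv : κ.Invariant η)
    (hA : MeasurableSet[tailSA Z] A) {k : ℕ} (hper : A =ᵐ[P] shift k ⁻¹' A)
    (hconst : ∀ g : Z → ℝ≥0∞, Measurable g → (∀ z, g z ≤ 1) →
      g =ᵐ[η] (lintegralOp κ)^[k] g → ∃ c, g =ᵐ[η] fun _ => c) (n : ℤ) :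
    ∃ h, IsMarkovDensity η κ P n A h ∧ h =ᵐ[η] fun _ => P A := by
  have hdens (m : ℤ) : ∃ h, IsMarkovDensity η κ P m A h ∧ ∀ z, h z ≤ 1 := by
    obtain ⟨h, hd⟩ := exists_isMarkovDensity hP hinv m (tailSA_le_coordFromSA m _ hA)
    exact ⟨fun z => min (h z) 1, hd.congr_ae hinv (hd.measurable.min measurable_const)
      ((hd.ae_le_one hP).mono fun z hz => (min_eq_left hz).symm), fun z => min_le_right _ _⟩
  choose H hH hH1 using hdens
  have hiter (j : ℕ) : ∀ m, H m =ᵐ[η] (lintegralOp κ)^[j] (H (m + j)) := by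
    induction j with
    | zero => simp
    | succ j ih =>
      intro m
      refine ((hH m).ae_eq_lintegralOp (hH (m + 1))).trans ?_
      rw [Function.iterate_succ_apply', Nat.cast_succ, add_comm (j : ℤ), ← add_assoc]
      exact lintegralOp_congr_ae hinv (ih (m + 1))
  have hper' : H (n + k) =ᵐ[η] H n := (hH _).ae_eq (hH n) fun B hB =>
    measure_inter_eval_add_eq (hP.measurePreserving_shift k)
      (tailSA_le_pi _ hA) hper n hB
  obtain ⟨c, hc⟩ := hconst (H n) (hH n).measurable (hH1 n)
    ((hiter k n).trans (iterate_lintegralOp_congr_ae hinv hper' k))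
  have hcA : c = P A := by
    have := (hH n).measure_inter_eval Set.univ MeasurableSet.univ
    rw [setLIntegral_univ, lintegral_congr_ae hc] at this
    simpa using this.symm
  exact ⟨H n, hH n, hcA ▸ hc⟩

theorem measure_eq_zero_or_one_of_isMarkovDensity [IsProbabilityMeasure P] [IsMarkovKernel κ]
    (hP : IsTrajMeasure η κ P) (hinv : κ.Invariant η) (hA : MeasurableSet A)
    (hd : ∀ n, ∃ h, IsMarkovDensity η κ P n A h ∧ h =ᵐ[η] fun _ => P A) :
    P A = 0 ∨ P A = 1 := by
  have hrestrict : P.restrict A = P A • P := by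
    refine measure_ext_of_cyl (by simp) fun m A₀ L hA₀ hL => ?_
    obtain ⟨h, hdA, hc⟩ := hd (m + L.length + 1)
    rw [Measure.restrict_apply (measurableSet_cyl (List.forall_mem_cons.2 ⟨hA₀, hL⟩)),
      Set.inter_comm, hdA.measure_inter_cyl m A₀ L hA₀ hL rfl, Measure.smul_apply, smul_eq_mul,
      hP.measure_cyl m hA₀ hL,
      ← lintegral_const_mul _ (measurable_chainLIntegral hL measurable_one)]
    have hchain := chainLIntegral_congr_ae hinv L (lintegralOp_congr_ae hinv hc)
    rw [lintegralOp_const, chainLIntegral_const hL] at hchain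
    exact lintegral_congr_ae (ae_restrict_of_ae hchain)
  have hAA : P (A ∩ A) = P A * P A := by
    simpa [Measure.restrict_apply hA] using congrArg (· A) hrestrict
  exact measure_eq_zero_or_one_of_indepSet_self ((indepSet_iff_measure_inter_eq_mul hA hA P).2 hAA)

end Tail

end MarkovChain

open MarkovChain

theorem statement6_general
    {Z : Type*} [MeasurableSpace Z]
    (κ : Kernel Z Z) [IsMarkovKernel κ]
    (η : Measure Z) [IsProbabilityMeasure η] (hinv : Kernel.Invariant κ η)
    (Q : Lp ℝ 1 η →ₗ[ℝ] Lp ℝ 1 η)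
    (hQrep : ∀ φ : Lp ℝ 1 η, (Q φ : Z → ℝ) =ᵐ[η] fun z => ∫ y, (φ : Z → ℝ) y ∂(κ z))
    (P : Measure (ℤ → Z)) [IsProbabilityMeasure P] (hP : IsTrajMeasure η κ P)
    -- (i): for every n ≥ 1, L² solutions of Q^n ψ = ψ are a.e. constant
    (hfix : ∀ n : ℕ, 1 ≤ n → ∀ ψ : Lp ℝ 1 η, MemLp (ψ : Z → ℝ) 2 η →
      (Q ^ n) ψ = ψ → ∃ c : ℝ, ψ = c • oneL1 η)
    -- (ii): every infinite family of tail sets contains two sets differing by a ℙ-null set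
    (hfin : ∀ f : ℕ → Set (ℤ → Z), (∀ i, MeasurableSet[tailSA Z] (f i)) →
      ∃ i j, i ≠ j ∧ P (symmDiff (f i) (f j)) = 0) :
    ∀ A : Set (ℤ → Z), MeasurableSet[tailSA Z] A → P A = 0 ∨ P A = 1 := by
  intro A hA
  obtain ⟨k, hk, hper⟩ := exists_ae_eq_shift_preimage hP hfin hA
  refine measure_eq_zero_or_one_of_isMarkovDensity hP hinv
    (tailSA_le_pi _ hA) ?_
  exact exists_isMarkovDensity_ae_eq_const hP hinv hA hper fun g hg hg1 hgk =>
    ae_eq_const_of_ae_eq_iterate Q hQrep hinv (hfix k hk) hg hg1 hgk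

/-- If the operator `Q` induced by the kernel has only constant `L²` fixed
points of all its powers, and the tail σ-algebra of the stationary trajectory measure contains
only finitely many sets up to null sets, then the tail σ-algebra is trivial. -/
theorem statement6
    {Z : Type*} [MeasurableSpace Z] [StandardBorelSpace Z]
    (κ : Kernel Z Z) [IsMarkovKernel κ]
    (η : Measure Z) [IsProbabilityMeasure η] (hinv : Kernel.Invariant κ η)
    (Q : Lp ℝ 1 η →ₗ[ℝ] Lp ℝ 1 η)
    (hQrep : ∀ φ : Lp ℝ 1 η, (Q φ : Z → ℝ) =ᵐ[η] fun z => ∫ y, (φ : Z → ℝ) y ∂(κ z))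
    (P : Measure (ℤ → Z)) [IsProbabilityMeasure P] (hP : IsTrajMeasure η κ P)
    -- (i): for every n ≥ 1, L² solutions of Q^n ψ = ψ are a.e. constant
    (hfix : ∀ n : ℕ, 1 ≤ n → ∀ ψ : Lp ℝ 1 η, MemLp (ψ : Z → ℝ) 2 η →
      (Q ^ n) ψ = ψ → ∃ c : ℝ, ψ = c • oneL1 η)
    -- (ii): every infinite family of tail sets contains two sets differing by a ℙ-null set
    (hfin : ∀ f : ℕ → Set (ℤ → Z), (∀ i, MeasurableSet[tailSA Z] (f i)) →
      ∃ i j, i ≠ j ∧ P (symmDiff (f i) (f j)) = 0) :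
    ∀ A : Set (ℤ → Z), MeasurableSet[tailSA Z] A → P A = 0 ∨ P A = 1 :=
  statement6_general κ η hinv Q hQrep P hP hfix hfin
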